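/- The same kernel K(x,y) = exp(-2ivy - e^{y-x}) (1 + βe^{-y})^{-iv-g} (1 - βe^{-y})^{-iv+g-1} satisfies the second-order equation ((v - i∂_y)² - (v - i∂_x)² + 2α(∂_y e^{-y} - e^{-x}) + β²((∂_y e^{-y})² - e^{-2x})) K(x,y) = 0 on the domain y > ln β. -/

import Mathlib

/-!
On `y > log β` both bases `1 ± βe^{-y}` are positive, so every factor of `K` is a genuine
exponential and `K` has logarithmic derivatives: `∂_x K = z K` and `∂_y K = D K`, where `D` is
rational in `w = e^{-y}` and `z = e^{y-x}`. Each term of the operator is then `K` times a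
polynomial in `D`, `∂_y D`, `w`, `z`, and the equation reduces to a rational identity in
`v, α, β, w, z`, checked by clearing the denominators `β` and `1 ± βw`.
-/

/-- The kernel
`K(x,y) = exp(-2ivy - e^{y-x}) (1+βe^{-y})^{-iv-g} (1-βe^{-y})^{-iv+g-1}`. -/
noncomputable def reflKer (α β : ℝ) (v : ℂ) (x y : ℝ) : ℂ :=
  Complex.exp (-2 * Complex.I * v * (y : ℂ) - Complex.exp ((y - x : ℝ) : ℂ)) *
    ((1 + β * Real.exp (-y) : ℝ) : ℂ) ^ (-Complex.I * v - ((1 / 2 + α / β : ℝ) : ℂ)) *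
    ((1 - β * Real.exp (-y) : ℝ) : ℂ) ^ (-Complex.I * v + ((1 / 2 + α / β : ℝ) : ℂ) - 1)

open Complex Filter Topology

section LogDeriv

variable {f g ω D : ℝ → ℂ} {a b c E : ℂ} {t : ℝ}

theorem HasDerivAt.mul_logDeriv (hf : HasDerivAt f (a * f t) t) (hg : HasDerivAt g (b * g t) t) :
    HasDerivAt (fun s => f s * g s) ((a + b) * (f t * g t)) t :=
  (hf.mul hg).congr_deriv (by ring)

theorem hasDerivAt_deriv_of_logDeriv (hf : ∀ᶠ s in 𝓝 t, HasDerivAt f (D s * f s) s)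
    (hD : HasDerivAt D E t) : HasDerivAt (deriv f) ((D t * D t + E) * f t) t :=
  ((hD.mul hf.self_of_nhds).congr_of_eventuallyEq (hf.mono fun _ hs => hs.deriv)).congr_deriv
    (by ring)

theorem hasDerivAt_mul_deriv_of_logDeriv (hω : HasDerivAt ω (c * ω t) t)
    (hf : ∀ᶠ s in 𝓝 t, HasDerivAt f (D s * f s) s) (hD : HasDerivAt D E t) :
    HasDerivAt (fun s => ω s * deriv f s) (((c + D t) * D t + E) * (ω t * f t)) t :=
  (hω.mul (hasDerivAt_deriv_of_logDeriv hf hD)).congr_deriv (by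
    rw [hf.self_of_nhds.deriv]; ring)

theorem HasDerivAt.ofReal_cpow_const {u : ℝ → ℝ} {u' : ℝ} (hu : HasDerivAt u u' t)
    (hpos : 0 < u t) (c : ℂ) :
    HasDerivAt (fun s => (u s : ℂ) ^ c) (c * u' / u t * (u t : ℂ) ^ c) t := by
  have hne : (u t : ℂ) ≠ 0 := ofReal_ne_zero.2 hpos.ne'
  refine ((hasStrictDerivAt_cpow_const (ofReal_mem_slitPlane.2 hpos)).hasDerivAt.comp t
    hu.ofReal_comp).congr_deriv ?_
  rw [cpow_sub _ _ hne, cpow_one]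
  field_simp

end LogDeriv

section ReflKer

/-- The logarithmic `y`-derivative of `reflKer α β v x y`, in terms of `w = e^{-y}` and
`z = e^{y-x}`. -/
noncomputable def reflKerLogDeriv (α β : ℝ) (v w z : ℂ) : ℂ :=
  -2 * I * v - z - (-I * v - ((1 / 2 + α / β : ℝ) : ℂ)) * (β * w / (1 + β * w))
    + (-I * v + ((1 / 2 + α / β : ℝ) : ℂ) - 1) * (β * w / (1 - β * w))

noncomputable def reflKerLogDeriv' (α β : ℝ) (v w z : ℂ) : ℂ :=
  -z + (-I * v - ((1 / 2 + α / β : ℝ) : ℂ)) * (β * w / (1 + β * w) ^ 2)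
    - (-I * v + ((1 / 2 + α / β : ℝ) : ℂ) - 1) * (β * w / (1 - β * w) ^ 2)

/-- The operator applied to `K`, divided by `K`, with `e^{-x} = z w`. -/
theorem reflKer_symbol_eq_zero (α : ℝ) {β : ℝ} (hβ : β ≠ 0) (v : ℂ) {w : ℂ} (z : ℂ)
    (hp : 1 + β * w ≠ 0) (hm : 1 - β * w ≠ 0) :
    -2 * I * v * reflKerLogDeriv α β v w z
        - (reflKerLogDeriv α β v w z ^ 2 + reflKerLogDeriv' α β v w z)
      + 2 * I * v * z + (z ^ 2 - z)
      + 2 * α * (w * (reflKerLogDeriv α β v w z - 1) - z * w)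
      + β ^ 2 * w ^ 2 * ((reflKerLogDeriv α β v w z - 2) * (reflKerLogDeriv α β v w z - 1)
        + reflKerLogDeriv' α β v w z - z ^ 2) = 0 := by
  have hβ' : (β : ℂ) ≠ 0 := ofReal_ne_zero.2 hβ
  unfold reflKerLogDeriv reflKerLogDeriv'
  push_cast
  field_simp
  ring

variable (α : ℝ) {β : ℝ} (v : ℂ)

theorem one_sub_mul_exp_neg_pos (hβ : 0 < β) {t : ℝ} (ht : Real.log β < t) :
    0 < 1 - β * Real.exp (-t) := by
  have : β * Real.exp (-t) < Real.exp t * Real.exp (-t) :=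
    mul_lt_mul_of_pos_right ((Real.log_lt_iff_lt_exp hβ).1 ht) (Real.exp_pos _)
  rw [← Real.exp_add, add_neg_cancel, Real.exp_zero] at this
  linarith

theorem one_add_and_one_sub_mul_exp_neg_ne_zero (hβ : 0 < β) {t : ℝ} (ht : Real.log β < t) :
    (1 + β * Real.exp (-t) : ℂ) ≠ 0 ∧ (1 - β * Real.exp (-t) : ℂ) ≠ 0 :=
  ⟨by exact_mod_cast (by positivity : (0 : ℝ) < 1 + β * Real.exp (-t)).ne',
    by exact_mod_cast (one_sub_mul_exp_neg_pos hβ ht).ne'⟩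

theorem hasDerivAt_reflKer_right (hβ : 0 < β) (x : ℝ) {t : ℝ} (ht : Real.log β < t) :
    HasDerivAt (fun s => reflKer α β v x s)
      (reflKerLogDeriv α β v (Real.exp (-t)) (cexp ↑(t - x)) * reflKer α β v x t) t := by
  have hw : HasDerivAt (fun s => β * Real.exp (-s)) (β * (Real.exp (-t) * -1)) t :=
    (hasDerivAt_neg t).exp.const_mul β
  have hz : HasDerivAt (fun s : ℝ => cexp ↑(s - x)) (cexp ↑(t - x) * ↑(1 : ℝ)) t :=
    ((hasDerivAt_id t).sub_const x).ofReal_comp.cexp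
  have hA : HasDerivAt (fun s : ℝ => cexp (-2 * I * v * s - cexp ↑(s - x)))
      ((-2 * I * v - cexp ↑(t - x)) * cexp (-2 * I * v * t - cexp ↑(t - x))) t :=
    (((hasDerivAt_id' t).ofReal_comp.const_mul (-2 * I * v)).sub hz).cexp.congr_deriv
      (by simp only [Pi.sub_apply]; push_cast; ring)
  have hB := (hw.const_add 1).ofReal_cpow_const (by positivity)
    (-I * v - ((1 / 2 + α / β : ℝ) : ℂ))
  have hC := (hw.const_sub 1).ofReal_cpow_const (one_sub_mul_exp_neg_pos hβ ht)
    (-I * v + ((1 / 2 + α / β : ℝ) : ℂ) - 1)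
  refine ((hA.mul_logDeriv hB).mul_logDeriv hC).congr_deriv ?_
  obtain ⟨hp, hm⟩ := one_add_and_one_sub_mul_exp_neg_ne_zero hβ ht
  unfold reflKerLogDeriv reflKer
  push_cast
  field_simp
  ring

theorem hasDerivAt_reflKerLogDeriv (hβ : 0 < β) (x : ℝ) {t : ℝ} (ht : Real.log β < t) :
    HasDerivAt (fun s => reflKerLogDeriv α β v (Real.exp (-s)) (cexp ↑(s - x)))
      (reflKerLogDeriv' α β v (Real.exp (-t)) (cexp ↑(t - x))) t := by
  obtain ⟨hp, hm⟩ := one_add_and_one_sub_mul_exp_neg_ne_zero hβ ht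
  have hw :
      HasDerivAt (fun s : ℝ => (β : ℂ) * Real.exp (-s)) (β * ↑(Real.exp (-t) * -1)) t :=
    (hasDerivAt_neg t).exp.ofReal_comp.const_mul (β : ℂ)
  have hz : HasDerivAt (fun s : ℝ => cexp ↑(s - x)) (cexp ↑(t - x) * ↑(1 : ℝ)) t :=
    ((hasDerivAt_id t).sub_const x).ofReal_comp.cexp
  have H := ((((hasDerivAt_const t (-2 * I * v)).sub hz).sub
    ((hw.div (hw.const_add 1) hp).const_mul (-I * v - ((1 / 2 + α / β : ℝ) : ℂ)))).add
    ((hw.div (hw.const_sub 1) hm).const_mul (-I * v + ((1 / 2 + α / β : ℝ) : ℂ) - 1)))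
  refine H.congr_deriv ?_
  unfold reflKerLogDeriv'
  push_cast
  field_simp
  ring

theorem hasDerivAt_reflKer_left (x y : ℝ) :
    HasDerivAt (fun s => reflKer α β v s y) (cexp ↑(y - x) * reflKer α β v x y) x := by
  have hz : HasDerivAt (fun s : ℝ => cexp ↑(y - s)) (cexp ↑(y - x) * ↑(-1 : ℝ)) x :=
    ((hasDerivAt_id x).const_sub y).ofReal_comp.cexp
  refine
    ((((hasDerivAt_const x (-2 * I * v * y)).sub hz).cexp.mul_const _).mul_const _).congr_deriv ?_
  unfold reflKer
  simp only [Pi.sub_apply]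
  push_cast
  ring

end ReflKer

/-- The second-order relation
`((v - i∂_y)² - (v - i∂_x)² + 2α(∂_y e^{-y} - e^{-x}) + β²((∂_y e^{-y})² - e^{-2x})) K = 0`,
where `(v - i∂)² = v² - 2iv∂ - ∂²` and `∂_y e^{-y}` means `f ↦ ∂_y (e^{-y} f)`. -/
theorem stmt10 (α β : ℝ) (hβ : 0 < β) (v : ℂ) (x y : ℝ) (hy : Real.log β < y) :
    (v ^ 2 * reflKer α β v x y - 2 * Complex.I * v * deriv (fun t => reflKer α β v x t) y
        - deriv (deriv (fun t => reflKer α β v x t)) y)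
      - (v ^ 2 * reflKer α β v x y - 2 * Complex.I * v * deriv (fun t => reflKer α β v t y) x
        - deriv (deriv (fun t => reflKer α β v t y)) x)
      + 2 * (α : ℂ) *
        (deriv (fun t => Complex.exp ((-t : ℝ) : ℂ) * reflKer α β v x t) y
          - Complex.exp ((-x : ℝ) : ℂ) * reflKer α β v x y)
      + (β : ℂ) ^ 2 *
        (deriv (fun t => Complex.exp ((-t : ℝ) : ℂ) *
            deriv (fun s => Complex.exp ((-s : ℝ) : ℂ) * reflKer α β v x s) t) y
          - Complex.exp ((-2 * x : ℝ) : ℂ) * reflKer α β v x y) = 0 := by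
  have hKy : ∀ᶠ t in 𝓝 y, HasDerivAt (fun s => reflKer α β v x s)
      (reflKerLogDeriv α β v (Real.exp (-t)) (cexp ↑(t - x)) * reflKer α β v x t) t :=
    (eventually_gt_nhds hy).mono fun t ht => hasDerivAt_reflKer_right α v hβ x ht
  have hD := hasDerivAt_reflKerLogDeriv α v hβ x hy
  have hexp (t : ℝ) : HasDerivAt (fun s : ℝ => cexp ↑(-s)) (-1 * cexp ↑(-t)) t :=
    (hasDerivAt_neg t).ofReal_comp.cexp.congr_deriv (by push_cast; ring)
  have hKx (t : ℝ) := hasDerivAt_reflKer_left α (β := β) v t y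
  have hz : HasDerivAt (fun t : ℝ => cexp ↑(y - t)) (-cexp ↑(y - x)) x :=
    ((hasDerivAt_id' x).const_sub y).ofReal_comp.cexp.congr_deriv (by push_cast; ring)
  rw [hKy.self_of_nhds.deriv, (hasDerivAt_deriv_of_logDeriv hKy hD).deriv, (hKx x).deriv,
    (hasDerivAt_deriv_of_logDeriv (.of_forall hKx) hz).deriv,
    ((hexp y).mul_logDeriv hKy.self_of_nhds).deriv,
    (hasDerivAt_mul_deriv_of_logDeriv (hexp y) (hKy.mono fun t ht => (hexp t).mul_logDeriv ht)
      (hD.const_add (-1))).deriv]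
  have hw : cexp ↑(-y) = ↑(Real.exp (-y)) := (ofReal_exp _).symm
  have hx : cexp ↑(-x) = cexp ↑(y - x) * ↑(Real.exp (-y)) := by
    rw [ofReal_exp, ← Complex.exp_add]; push_cast; ring_nf
  have hx2 : cexp ↑(-2 * x) = (cexp ↑(y - x) * ↑(Real.exp (-y))) ^ 2 := by
    rw [← hx, ← Complex.exp_nat_mul]; push_cast; ring_nf
  obtain ⟨hp, hm⟩ := one_add_and_one_sub_mul_exp_neg_ne_zero hβ hy
  rw [hw, hx, hx2]
  linear_combination
    reflKer α β v x y * reflKer_symbol_eq_zero α hβ.ne' v (cexp ↑(y - x)) hp hm
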